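/- Let (p_i)_{i∈ℕ} be points of a bounded subset of ℝ², let x₀ ∈ ℝ², and let (Ω_i), (B^i_1), (B^i_2), (B^i_3) be real numbers with ∑_i (|Ω_i| + |B^i_1| + |B^i_2| + |B^i_3|) < ∞. Define the distributions on ℝ² (indices α, β, γ, κ range over {1,2}, k over {1,2,3}, with 3 written z, ε the 2D Levi-Civita symbol): Θ := ∑_i Ω_i δ_{p_i}; Λ_k := ∑_i B^i_k δ_{p_i}; α_β := ∑_i (B^i_β − ε_{βγ}(p^i_γ − x_{0γ}) Ω_i) δ_{p_i}; α_z := Λ_z; and the contortion κ_{kj} := δ_{kz} α_j − ½ α_z δ_{kj}. Then all these series converge in the sense of distributions, and for each k the distribution δ_{zk} Θ + ε_{αβ} ∂_α κ_{kβ} equals: for k = z, ∑_i ( Ω_i δ_{p_i} + ε_{αγ}( B^i_γ + ε_{βγ}(p^i_β − x_{0β}) Ω_i ) ∂_α δ_{p_i} ); and for k = κ ∈ {1,2}, ½ ε_{κα} ∑_i B^i_z ∂_α δ_{p_i}. -/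

import Mathlib

/-! Every defect weight `Ω_i`, `B^i_k`, `α_β` and `κ_{kj}` is `O(c_i)` with
`c_i = |Ω_i| + |B^i_1| + |B^i_2| + |B^i_3|`: the only non-constant coefficients are the
lever arms `p_i − x₀`, which are bounded. Since `φ` and `∂_α φ` are bounded, every series
converges absolutely, and both identities follow by exchanging `∑'` with the finite sums
over the planar indices. For `k = z` one uses `κ_{zβ} = α_β`; for planar `k = κ` only
`−½ B_z δ_{κβ}` survives, and the antisymmetry of `ε` turns `ε_{ακ}` into `−ε_{κα}`. -/

open MeasureTheory Real

/-- Partial derivative in the `α`-th coordinate direction of a function on `ℝ²`. -/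
noncomputable def pd (α : Fin 2) (f : EuclideanSpace ℝ (Fin 2) → ℝ) :
    EuclideanSpace ℝ (Fin 2) → ℝ :=
  fun x => fderiv ℝ f x (EuclideanSpace.single α 1)

/-- The 2D Levi-Civita symbol: `ε₀₁ = 1 = −ε₁₀`, `ε₀₀ = ε₁₁ = 0`. -/
noncomputable def eps2 (a b : Fin 2) : ℝ := ((b : ℕ) : ℝ) - ((a : ℕ) : ℝ)

/-- Weight of the auxiliary defect density `α_β = B^i_β − ε_{βγ}(p^i_γ − x₀_γ) Ω_i`
at the `i`-th defect point. -/
noncomputable def aw (p : ℕ → EuclideanSpace ℝ (Fin 2)) (x₀ : EuclideanSpace ℝ (Fin 2))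
    (Ω : ℕ → ℝ) (B : ℕ → Fin 3 → ℝ) (i : ℕ) (β : Fin 2) : ℝ :=
  B i β.castSucc - (∑ γ : Fin 2, eps2 β γ * (p i γ - x₀ γ)) * Ω i

/-- Weight of the contortion `κ_{kj} = δ_{kz} α_j − ½ α_z δ_{kj}` at the `i`-th defect
point (`k : Fin 3` with `z = 2`, planar `j : Fin 2`, and `α_z = Λ_z` has weight `B^i_z`). -/
noncomputable def kw (p : ℕ → EuclideanSpace ℝ (Fin 2)) (x₀ : EuclideanSpace ℝ (Fin 2))
    (Ω : ℕ → ℝ) (B : ℕ → Fin 3 → ℝ) (i : ℕ) (k : Fin 3) (j : Fin 2) : ℝ :=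
  (if k = 2 then aw p x₀ Ω B i j else 0)
    - (1 / 2) * B i 2 * (if (k : ℕ) = (j : ℕ) then 1 else 0)

open Asymptotics Filter

section Boundedness

variable {ι : Type*} {l : Filter ι}

theorem HasCompactSupport.isBigO_one_comp {E : Type*} [TopologicalSpace E] {f : E → ℝ}
    (hfc : HasCompactSupport f) (hf : Continuous f) (p : ι → E) :
    (fun i => f (p i)) =O[l] fun _ => (1 : ℝ) := by
  obtain ⟨C, hC⟩ := hfc.exists_bound_of_continuous hf
  exact .of_bound C (.of_forall fun i => by simpa using hC (p i))

theorem isBigO_one_apply_sub {n : ℕ} {p : ι → EuclideanSpace ℝ (Fin n)}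
    (hp : Bornology.IsBounded (Set.range p)) (x₀ : EuclideanSpace ℝ (Fin n)) (γ : Fin n) :
    (fun i => p i γ - x₀ γ) =O[l] fun _ => (1 : ℝ) := by
  obtain ⟨R, hR⟩ := isBounded_iff_forall_norm_le.mp hp
  refine .of_bound (R + ‖x₀‖) (.of_forall fun i => ?_)
  calc ‖p i γ - x₀ γ‖ = ‖(p i - x₀) γ‖ := rfl
    _ ≤ ‖p i - x₀‖ := PiLp.norm_apply_le _ γ
    _ ≤ R + ‖x₀‖ := (norm_sub_le _ _).trans (by gcongr; exact hR _ ⟨i, rfl⟩)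
    _ = (R + ‖x₀‖) * ‖(1 : ℝ)‖ := by rw [norm_one, mul_one]

theorem isBigO_of_abs_le {f c : ι → ℝ} (h : ∀ i, |f i| ≤ c i) : f =O[l] c :=
  isBigO_of_le _ fun i => (h i).trans (le_abs_self _)

theorem summable_mul_of_isBigO {c W g : ι → ℝ} (hc : Summable c) (hW : W =O[cofinite] c)
    (hg : g =O[cofinite] fun _ => (1 : ℝ)) : Summable fun i => W i * g i :=
  summable_of_isBigO hc (by simpa using hW.mul hg)

end Boundedness

theorem continuous_pd {φ : EuclideanSpace ℝ (Fin 2) → ℝ} (hφ : ContDiff ℝ 1 φ) (α : Fin 2) :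
    Continuous (pd α φ) :=
  (hφ.continuous_fderiv one_ne_zero).clm_apply continuous_const

theorem HasCompactSupport.pd {φ : EuclideanSpace ℝ (Fin 2) → ℝ} (hφ : HasCompactSupport φ)
    (α : Fin 2) : HasCompactSupport (pd α φ) :=
  hφ.fderiv_apply ℝ _

theorem eps2_swap (a b : Fin 2) : eps2 a b = -eps2 b a := by
  simp only [eps2]; ring

section Weights

variable (p : ℕ → EuclideanSpace ℝ (Fin 2)) (x₀ : EuclideanSpace ℝ (Fin 2))
  (Ω : ℕ → ℝ) (B : ℕ → Fin 3 → ℝ)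

theorem aw_eq (i : ℕ) (γ : Fin 2) :
    aw p x₀ Ω B i γ
      = B i γ.castSucc + (∑ β : Fin 2, eps2 β γ * (p i β - x₀ β)) * Ω i := by
  simp only [aw, Fin.sum_univ_two]
  fin_cases γ <;> simp [eps2] <;> ring

theorem kw_two (i : ℕ) (β : Fin 2) : kw p x₀ Ω B i 2 β = aw p x₀ Ω B i β := by
  fin_cases β <;> simp [kw]

theorem kw_castSucc (i : ℕ) (κ β : Fin 2) :
    kw p x₀ Ω B i κ.castSucc β = if κ = β then -(1 / 2) * B i 2 else 0 := by
  fin_cases κ <;> fin_cases β <;> simp [kw]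

variable {p x₀ Ω B} {l : Filter ℕ} {c : ℕ → ℝ}

theorem isBigO_aw (hp : Bornology.IsBounded (Set.range p)) (hΩ : Ω =O[l] c)
    (hB : ∀ k, (fun i => B i k) =O[l] c) (β : Fin 2) :
    (fun i => aw p x₀ Ω B i β) =O[l] c := by
  have hS : (fun i => ∑ γ : Fin 2, eps2 β γ * (p i γ - x₀ γ)) =O[l] fun _ => (1 : ℝ) :=
    .fun_sum fun γ _ => (isBigO_one_apply_sub hp x₀ γ).const_mul_left _
  have hSΩ := hS.mul hΩ
  simp only [one_mul] at hSΩ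
  simpa only [aw] using (hB β.castSucc).sub hSΩ

theorem isBigO_kw (hp : Bornology.IsBounded (Set.range p)) (hΩ : Ω =O[l] c)
    (hB : ∀ k, (fun i => B i k) =O[l] c) (k : Fin 3) (j : Fin 2) :
    (fun i => kw p x₀ Ω B i k j) =O[l] c := by
  have hA : (fun i => if k = 2 then aw p x₀ Ω B i j else 0) =O[l] c := by
    split_ifs
    · exact isBigO_aw hp hΩ hB j
    · exact isBigO_zero _ _
  refine hA.sub <| ((hB 2).const_mul_left
    ((1 / 2) * if (k : ℕ) = (j : ℕ) then 1 else 0)).congr_left fun i => by ring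

theorem tsum_kw_castSucc_mul (g : ℕ → ℝ) (κ β : Fin 2) :
    ∑' i, kw p x₀ Ω B i κ.castSucc β * g i
      = if κ = β then -(1 / 2) * ∑' i, B i 2 * g i else 0 := by
  split_ifs with h <;> simp [kw_castSucc, h, ← tsum_mul_left, mul_assoc]

theorem sum_eps2_mul_tsum_kw_castSucc (g : ℕ → Fin 2 → ℝ) (κ : Fin 2) :
    ∑ α : Fin 2, ∑ β : Fin 2, eps2 α β * ∑' i, kw p x₀ Ω B i κ.castSucc β * g i α
      = (1 / 2) * ∑ α : Fin 2, eps2 κ α * ∑' i, B i 2 * g i α := by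
  simp only [tsum_kw_castSucc_mul, mul_ite, mul_zero, Finset.sum_ite_eq, Finset.mem_univ,
    if_true, eps2_swap _ κ, Finset.mul_sum]
  exact Finset.sum_congr rfl fun α _ => by ring

end Weights

/-- **Kröner's identity (Theorem 2.8 of the paper):** for a countable family of parallel
defect lines with absolutely summable Frank and Burgers weights, all defect-density
series converge distributionally and `δ_{zk}Θ + ε_{αβ}∂_α κ_{kβ}` equals the explicit
incompatibility of the main theorem, tested against any `φ ∈ C_c^∞(ℝ²)`. -/
theorem kroner_identity_countable (p : ℕ → EuclideanSpace ℝ (Fin 2))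
    (hp : Bornology.IsBounded (Set.range p)) (x₀ : EuclideanSpace ℝ (Fin 2))
    (Ω : ℕ → ℝ) (B : ℕ → Fin 3 → ℝ)
    (hsum : Summable fun i => |Ω i| + |B i 0| + |B i 1| + |B i 2|) :
    ∀ φ : EuclideanSpace ℝ (Fin 2) → ℝ, ContDiff ℝ (⊤ : ℕ∞) φ → HasCompactSupport φ →
      (Summable fun i => Ω i * φ (p i)) ∧
      (∀ k : Fin 3, Summable fun i => B i k * φ (p i)) ∧
      (∀ β : Fin 2, Summable fun i => aw p x₀ Ω B i β * φ (p i)) ∧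
      (∀ k : Fin 3, ∀ j α : Fin 2,
        Summable fun i => kw p x₀ Ω B i k j * (-(pd α φ (p i)))) ∧
      (∀ α : Fin 2, Summable fun i => B i 2 * (-(pd α φ (p i)))) ∧
      (Summable fun i => Ω i * φ (p i)
        + ∑ α : Fin 2, ∑ γ : Fin 2,
            eps2 α γ * (B i γ.castSucc + (∑ β : Fin 2, eps2 β γ * (p i β - x₀ β)) * Ω i)
              * (-(pd α φ (p i)))) ∧
      ((∑' i, Ω i * φ (p i))
          + ∑ α : Fin 2, ∑ β : Fin 2,
              eps2 α β * (∑' i, kw p x₀ Ω B i 2 β * (-(pd α φ (p i))))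
        = ∑' i, (Ω i * φ (p i)
            + ∑ α : Fin 2, ∑ γ : Fin 2,
                eps2 α γ
                  * (B i γ.castSucc + (∑ β : Fin 2, eps2 β γ * (p i β - x₀ β)) * Ω i)
                  * (-(pd α φ (p i))))) ∧
      (∀ κ : Fin 2,
        ∑ α : Fin 2, ∑ β : Fin 2,
            eps2 α β * (∑' i, kw p x₀ Ω B i κ.castSucc β * (-(pd α φ (p i))))
          = (1 / 2) * ∑ α : Fin 2, eps2 κ α * (∑' i, B i 2 * (-(pd α φ (p i))))) := by
  intro φ hφ hφc
  set c : ℕ → ℝ := fun i => |Ω i| + |B i 0| + |B i 1| + |B i 2|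
  have hΩ : Ω =O[cofinite] c := isBigO_of_abs_le fun i => by
    linarith [abs_nonneg (B i 0), abs_nonneg (B i 1), abs_nonneg (B i 2)]
  have hB : ∀ k, (fun i => B i k) =O[cofinite] c := fun k => isBigO_of_abs_le fun i => by
    fin_cases k <;> dsimp [c] <;> linarith [abs_nonneg (Ω i), abs_nonneg (B i 0),
      abs_nonneg (B i 1), abs_nonneg (B i 2)]
  have hφp : (fun i => φ (p i)) =O[cofinite] fun _ => (1 : ℝ) :=
    hφc.isBigO_one_comp hφ.continuous p
  have hdφp : ∀ α, (fun i => -pd α φ (p i)) =O[cofinite] fun _ => (1 : ℝ) := fun α =>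
    ((hφc.pd α).isBigO_one_comp (continuous_pd (hφ.of_le (mod_cast le_top)) α) p).neg_left
  have S : ∀ {W g : ℕ → ℝ}, W =O[cofinite] c → g =O[cofinite] (fun _ => (1 : ℝ)) →
      Summable fun i => W i * g i :=
    summable_mul_of_isBigO hsum
  have hz : HasSum (fun i => Ω i * φ (p i)
      + ∑ α : Fin 2, ∑ γ : Fin 2, eps2 α γ * aw p x₀ Ω B i γ * (-(pd α φ (p i))))
      ((∑' i, Ω i * φ (p i)) + ∑ α : Fin 2, ∑ β : Fin 2,
        eps2 α β * ∑' i, kw p x₀ Ω B i 2 β * (-(pd α φ (p i)))) := by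
    simp only [kw_two, mul_assoc]
    exact (S hΩ hφp).hasSum.add <| hasSum_sum fun α _ => hasSum_sum fun γ _ =>
      (S (isBigO_aw hp hΩ hB γ) (hdφp α)).hasSum.mul_left _
  simp only [← aw_eq]
  exact ⟨S hΩ hφp, fun k => S (hB k) hφp, fun β => S (isBigO_aw hp hΩ hB β) hφp,
    fun k j α => S (isBigO_kw hp hΩ hB k j) (hdφp α), fun α => S (hB 2) (hdφp α),
    hz.summable, hz.tsum_eq.symm,
    sum_eps2_mul_tsum_kw_castSucc (fun i α => -pd α φ (p i))⟩
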